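/- arXiv:1911.12988 — 4 statements merged into one kernel-verified Lean document; each statement's English description precedes it below -/
import Mathlib

section
/- There exists a constant c > 0 such that for every finite set P of n points in the plane in general position and every orientation θ, the number of nondegenerate empty squares in orientation θ having at least three pinned sides is at most c·n. -/
open Real Set

/-- The four side labels of a square. -/
inductive SqSide : Type
  | top
  | right
  | bottom
  | left
  deriving DecidableEq

/-- A (solid, closed) square in the plane, given by its center, its radius `r`
(half the side length) and its orientation `θ`. -/
structure Square : Type where
  center : ℝ × ℝ
  r : ℝ
  θ : ℝ

namespace Square

/-- The local `x`-coordinate of a point in the rotated frame of the square. -/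
noncomputable def lx (S : Square) (p : ℝ × ℝ) : ℝ :=
  (p.1 - S.center.1) * Real.cos S.θ + (p.2 - S.center.2) * Real.sin S.θ

/-- The local `y`-coordinate of a point in the rotated frame of the square. -/
noncomputable def ly (S : Square) (p : ℝ × ℝ) : ℝ :=
  -(p.1 - S.center.1) * Real.sin S.θ + (p.2 - S.center.2) * Real.cos S.θ

/-- A valid parametrization: nonnegative radius and orientation in `[0, π/2)`.
Every geometric square (with sides parallel to the directions `θ` and `θ + π/2`
for some `θ`) has such a parametrization, which is unique when `0 < r`. -/
def Valid (S : Square) : Prop :=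
  0 ≤ S.r ∧ 0 ≤ S.θ ∧ S.θ < Real.pi / 2

/-- Membership in the closed solid square. -/
def Mem (S : Square) (p : ℝ × ℝ) : Prop :=
  |S.lx p| ≤ S.r ∧ |S.ly p| ≤ S.r

/-- The square as a subset of the plane. -/
def toSet (S : Square) : Set (ℝ × ℝ) :=
  {p | S.Mem p}

/-- Membership in the interior of the square. -/
def InteriorMem (S : Square) (p : ℝ × ℝ) : Prop :=
  |S.lx p| < S.r ∧ |S.ly p| < S.r

/-- `p` lies on the closed side of `S` labeled `a` (sides include their endpoints). -/
def OnSide (S : Square) (a : SqSide) (p : ℝ × ℝ) : Prop :=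
  match a with
  | SqSide.top    => S.ly p = S.r ∧ |S.lx p| ≤ S.r
  | SqSide.bottom => S.ly p = -S.r ∧ |S.lx p| ≤ S.r
  | SqSide.right  => S.lx p = S.r ∧ |S.ly p| ≤ S.r
  | SqSide.left   => S.lx p = -S.r ∧ |S.ly p| ≤ S.r

/-- `p` lies on the boundary of `S`. -/
def OnBoundary (S : Square) (p : ℝ × ℝ) : Prop :=
  ∃ a : SqSide, S.OnSide a p

/-- `S` is a square in orientation `φ`, i.e. its sides are parallel to the
directions `φ` and `φ + π/2` (orientations are taken modulo `π/2`). -/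
def InOrientation (S : Square) (φ : ℝ) : Prop :=
  ∃ k : ℤ, φ - S.θ = (k : ℝ) * (Real.pi / 2)

/-- The opposite side label. -/
def _root_.SqSide.opp : SqSide → SqSide
  | SqSide.top => SqSide.bottom
  | SqSide.bottom => SqSide.top
  | SqSide.left => SqSide.right
  | SqSide.right => SqSide.left

end Square

/-- The set of contact pairs of the square `S` with respect to the point set `P`:
pairs `(p, a)` with `p ∈ P` lying on the side of `S` labeled `a`. -/
def contactPairs (P : Finset (ℝ × ℝ)) (S : Square) : Set ((ℝ × ℝ) × SqSide) :=
  {pa | pa.1 ∈ P ∧ S.OnSide pa.2 pa.1}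

/-- The set of contact points of `S`: points of `P` on the boundary of `S`. -/
def contactPoints (P : Finset (ℝ × ℝ)) (S : Square) : Set (ℝ × ℝ) :=
  {p | p ∈ P ∧ S.OnBoundary p}

/-- `S` is an empty square among `P`: a (validly parametrized) square whose
interior contains no point of `P`. -/
def IsEmptySquare (P : Finset (ℝ × ℝ)) (S : Square) : Prop :=
  S.Valid ∧ ∀ p ∈ P, ¬ S.InteriorMem p

/-- `P` is in general position: no square in any orientation has five or more
contact pairs among `P`. -/
def GenPos (P : Finset (ℝ × ℝ)) : Prop :=
  ∀ S : Square, S.Valid → (contactPairs P S).ncard ≤ 4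

/-- A `4`-square: an empty square with exactly four contact pairs. -/
def Is4Square (P : Finset (ℝ × ℝ)) (S : Square) : Prop :=
  IsEmptySquare P S ∧ (contactPairs P S).ncard = 4

/-- A nontrivial `4`-square: a `4`-square which is not a degenerate
single-point square (i.e. it has positive radius). -/
def IsNontrivial4Square (P : Finset (ℝ × ℝ)) (S : Square) : Prop :=
  Is4Square P S ∧ 0 < S.r

/-- A `(4,k)`-square: a `4`-square with exactly `k` contact points. -/
def Is4kSquare (P : Finset (ℝ × ℝ)) (k : ℕ) (S : Square) : Prop :=
  Is4Square P S ∧ (contactPoints P S).ncard = k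

/-- `S` is stapled: some side of `S` contains two distinct points of `P`. -/
def IsStapled (P : Finset (ℝ × ℝ)) (S : Square) : Prop :=
  ∃ a : SqSide, ∃ p ∈ P, ∃ q ∈ P, p ≠ q ∧ S.OnSide a p ∧ S.OnSide a q

/-! Fix the orientation `θ`. A square with three pinned sides has a point `z ∈ P` on a side `σ`
whose two adjacent sides are both pinned; charging the square to `(z, σ)`, it suffices to show that
no pair is charged more than `24` times, and turning the frame by `π / 2` reduces this to
`σ = left`. Let `Y` be the largest square charged to `(z, left)`. Every other one has its top or
its bottom pin on the boundary of `Y`, which by general position contains at most four points of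
`P`. The squares charged to `(z, left)` whose bottom sides pass through a common point share their
bottom-left corner; the top pins of all but the largest of them lie on the left side of the
largest, which besides its top and bottom pins holds at most two points, so there are at most three
such squares. Top sides through a common point are the mirror image of this case. -/

instance : Fintype SqSide :=
  ⟨{.top, .right, .bottom, .left}, fun a => by cases a <;> decide⟩

namespace SqSide

/-- The label a side receives when the frame of its square is turned by `π / 2`. -/
def cw : SqSide → SqSide
  | top => right
  | right => bottom
  | bottom => left
  | left => top

/-- The relabelling of sides under a reflection in a line parallel to the top and bottom sides. -/
def reflect : SqSide → SqSide
  | top => bottom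
  | bottom => top
  | right => right
  | left => left

theorem cw_bijective : Function.Bijective cw :=
  Fintype.bijective_iff_injective_and_card cw |>.mpr ⟨by decide, rfl⟩

theorem reflect_bijective : Function.Bijective reflect :=
  Fintype.bijective_iff_injective_and_card reflect |>.mpr ⟨by decide, rfl⟩

theorem cw_opp (a : SqSide) : a.opp.cw = a.cw.opp := by
  cases a <;> rfl

theorem exists_cw_mem_of_three_le_card (s : Finset SqSide) (h : 3 ≤ s.card) :
    ∃ σ ∈ s, σ.cw ∈ s ∧ σ.cw.opp ∈ s := by
  revert s; decide

end SqSide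

def IsGenericEmpty (P : Finset (ℝ × ℝ)) (S : Square) : Prop :=
  0 < S.r ∧ (∀ p ∈ P, ¬ S.InteriorMem p) ∧ (contactPairs P S).ncard ≤ 4

/-- `σ.cw` and `σ.cw.opp` are the two sides adjacent to `σ`. -/
def Anchored (P : Finset (ℝ × ℝ)) (S : Square) (z : ℝ × ℝ) (σ : SqSide) : Prop :=
  S.OnSide σ z ∧ (∃ p ∈ P, S.OnSide σ.cw p) ∧ ∃ p ∈ P, S.OnSide σ.cw.opp p

structure IsSymmetry (g : ℝ × ℝ → ℝ × ℝ) (Φ : Square → Square) (τ : SqSide → SqSide) :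
    Prop where
  injective_pt : g.Injective
  injective_sq : Φ.Injective
  bijective_side : τ.Bijective
  r_map : ∀ S, (Φ S).r = S.r
  onSide_map : ∀ S a p, (Φ S).OnSide (τ a) (g p) ↔ S.OnSide a p
  interiorMem_map : ∀ S p, (Φ S).InteriorMem (g p) ↔ S.InteriorMem p

namespace Square

section

variable {S S' : Square} {p q : ℝ × ℝ}

theorem lx_eq_sub (h : S'.θ = S.θ) (p : ℝ × ℝ) : S'.lx p = S.lx p - S.lx S'.center := by
  simp only [lx, h]; ring

theorem ly_eq_sub (h : S'.θ = S.θ) (p : ℝ × ℝ) : S'.ly p = S.ly p - S.ly S'.center := by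
  simp only [ly, h]; ring

theorem ly_sub_ly (h : S'.θ = S.θ) (p q : ℝ × ℝ) : S'.ly p - S'.ly q = S.ly p - S.ly q := by
  rw [ly_eq_sub h, ly_eq_sub h]; ring

theorem eq_of_lx_eq_of_ly_eq (hθ : S'.θ = S.θ) (hr : S'.r = S.r) (hx : S'.lx p = S.lx p)
    (hy : S'.ly q = S.ly q) : S' = S := by
  have hx₀ : S.lx S'.center = 0 := by linarith [lx_eq_sub hθ p]
  have hy₀ : S.ly S'.center = 0 := by linarith [ly_eq_sub hθ q]
  have hc : S'.center = S.center := by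
    simp only [lx, ly] at hx₀ hy₀
    ext
    · linear_combination Real.cos S.θ * hx₀ - Real.sin S.θ * hy₀ -
        (S'.center.1 - S.center.1) * Real.sin_sq_add_cos_sq S.θ
    · linear_combination Real.sin S.θ * hx₀ + Real.cos S.θ * hy₀ -
        (S'.center.2 - S.center.2) * Real.sin_sq_add_cos_sq S.θ
  cases S; cases S'
  simp_all

theorem onBoundary_of_mem (hm : S.Mem p) (hi : ¬ S.InteriorMem p) : S.OnBoundary p := by
  obtain ⟨hx, hy⟩ := hm
  have hr : 0 ≤ S.r := (abs_nonneg _).trans hx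
  simp only [InteriorMem, not_and_or, not_lt] at hi
  rcases hi with hx' | hy'
  · rcases (abs_eq hr).mp (le_antisymm hx hx') with h | h
    exacts [⟨.right, h, hy⟩, ⟨.left, h, hy⟩]
  · rcases (abs_eq hr).mp (le_antisymm hy hy') with h | h
    exacts [⟨.top, h, hx⟩, ⟨.bottom, h, hx⟩]

end

section

/-- The same geometric square, with its frame turned by `π / 2`. -/
noncomputable def turn (S : Square) : Square := ⟨S.center, S.r, S.θ + π / 2⟩

def reflectPt (p : ℝ × ℝ) : ℝ × ℝ := (p.1, -p.2)

def reflect (S : Square) : Square := ⟨reflectPt S.center, S.r, -S.θ⟩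

variable (S : Square) (p : ℝ × ℝ)

@[simp] theorem r_turn : S.turn.r = S.r := rfl

@[simp] theorem r_reflect : S.reflect.r = S.r := rfl

@[simp] theorem lx_turn : S.turn.lx p = S.ly p := by
  simp only [turn, lx, ly, Real.cos_add_pi_div_two, Real.sin_add_pi_div_two]; ring

@[simp] theorem ly_turn : S.turn.ly p = -S.lx p := by
  simp only [turn, lx, ly, Real.cos_add_pi_div_two, Real.sin_add_pi_div_two]; ring

@[simp] theorem lx_reflect : S.reflect.lx (reflectPt p) = S.lx p := by
  simp only [reflect, reflectPt, lx, Real.cos_neg, Real.sin_neg]; ring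

@[simp] theorem ly_reflect : S.reflect.ly (reflectPt p) = -S.ly p := by
  simp only [reflect, reflectPt, ly, Real.cos_neg, Real.sin_neg]; ring

theorem isSymmetry_turn : IsSymmetry id turn SqSide.cw where
  injective_pt := Function.injective_id
  injective_sq S S' h := by
    cases S; cases S'; simp_all [turn]
  bijective_side := SqSide.cw_bijective
  r_map _ := rfl
  onSide_map S a p := by
    cases a <;> simp [OnSide, SqSide.cw, neg_eq_iff_eq_neg]
  interiorMem_map S p := by
    simp [InteriorMem, and_comm]

theorem isSymmetry_reflect : IsSymmetry reflectPt reflect SqSide.reflect where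
  injective_pt p q h := by
    simp_all [reflectPt, Prod.ext_iff]
  injective_sq S S' h := by
    cases S; cases S'; simp_all [reflect, reflectPt, Prod.ext_iff]
  bijective_side := SqSide.reflect_bijective
  r_map _ := rfl
  onSide_map S a p := by
    cases a <;> simp [OnSide, SqSide.reflect, neg_eq_iff_eq_neg]
  interiorMem_map S p := by
    simp [InteriorMem]

end

section

variable {P : Finset (ℝ × ℝ)} {X Y : Square} {z w t : ℝ × ℝ}

theorem eq_of_r_eq_of_onSide_left_of_onSide_bottom (hθ : X.θ = Y.θ) (hr : X.r = Y.r)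
    (hXz : X.OnSide .left z) (hYz : Y.OnSide .left z) (hXw : X.OnSide .bottom w)
    (hYw : Y.OnSide .bottom w) : X = Y :=
  eq_of_lx_eq_of_ly_eq hθ hr (by rw [hXz.1, hYz.1, hr]) (by rw [hXw.1, hYw.1, hr])

theorem r_eq_of_onSide_top_of_onSide_bottom (hθ : X.θ = Y.θ) (hXt : X.OnSide .top t)
    (hYt : Y.OnSide .top t) (hXw : X.OnSide .bottom w) (hYw : Y.OnSide .bottom w) :
    X.r = Y.r := by
  have h := ly_sub_ly hθ t w
  rw [hXt.1, hXw.1, hYt.1, hYw.1] at h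
  linarith

theorem onSide_left_of_onSide_top (hθ : X.θ = Y.θ) (hX : 0 < X.r) (hr : X.r < Y.r)
    (hXz : X.OnSide .left z) (hYz : Y.OnSide .left z) (hXw : X.OnSide .bottom w)
    (hYw : Y.OnSide .bottom w) (hXt : X.OnSide .top t) (ht : ¬ Y.InteriorMem t) :
    Y.OnSide .left t := by
  have hx := lx_eq_sub hθ t
  have hy := ly_eq_sub hθ t
  have hxz := lx_eq_sub hθ z
  have hyw := ly_eq_sub hθ w
  obtain ⟨hXt₁, hXt₂⟩ := hXt
  obtain ⟨hXt₂, hXt₃⟩ := abs_le.mp hXt₂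
  have hYt : |Y.ly t| < Y.r := abs_lt.mpr ⟨by linarith [hXz.1, hYz.1, hXw.1, hYw.1],
    by linarith [hXz.1, hYz.1, hXw.1, hYw.1]⟩
  have : Y.r ≤ |Y.lx t| := not_lt.mp fun h => ht ⟨h, hYt⟩
  refine ⟨?_, hYt.le⟩
  rcases le_abs'.mp this with h | h <;> linarith [hXz.1, hYz.1]

theorem exists_pin_onBoundary (hθ : X.θ = Y.θ) (hr : X.r ≤ Y.r)
    (hY : ∀ p ∈ P, ¬ Y.InteriorMem p) (hX : Anchored P X z .left) (hYz : Y.OnSide .left z) :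
    ∃ w ∈ P, Y.OnBoundary w ∧ (X.OnSide .bottom w ∨ X.OnSide .top w) := by
  obtain ⟨⟨hXz₁, hXz₂⟩, ⟨t, htP, ht₁, ht₂⟩, ⟨b, hbP, hb₁, hb₂⟩⟩ := hX
  obtain ⟨hYz₁, hYz₂⟩ := hYz
  rw [abs_le] at hXz₂ hYz₂ ht₂ hb₂
  have hxz := lx_eq_sub hθ z
  have hyz := ly_eq_sub hθ z
  by_cases hc : Y.ly X.center + X.r ≤ Y.r
  · refine ⟨t, htP, onBoundary_of_mem ⟨abs_le.mpr ⟨?_, ?_⟩, abs_le.mpr ⟨?_, ?_⟩⟩ (hY t htP),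
      .inr ⟨ht₁, abs_le.mpr ht₂⟩⟩ <;>
    linarith [lx_eq_sub hθ t, ly_eq_sub hθ t]
  · refine ⟨b, hbP, onBoundary_of_mem ⟨abs_le.mpr ⟨?_, ?_⟩, abs_le.mpr ⟨?_, ?_⟩⟩ (hY b hbP),
      .inl ⟨hb₁, abs_le.mpr hb₂⟩⟩ <;>
    linarith [lx_eq_sub hθ b, ly_eq_sub hθ b]

end

end Square

namespace IsSymmetry

variable {g : ℝ × ℝ → ℝ × ℝ} {Φ : Square → Square} {τ : SqSide → SqSide}
  {P : Finset (ℝ × ℝ)} {S : Square}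

theorem contactPairs_map (h : IsSymmetry g Φ τ) :
    contactPairs (P.image g) (Φ S) = Prod.map g τ '' contactPairs P S := by
  ext ⟨q, b⟩
  obtain ⟨a, rfl⟩ := h.bijective_side.2 b
  constructor
  · rintro ⟨hq, hS⟩
    obtain ⟨p, hp, rfl⟩ := Finset.mem_image.mp hq
    exact ⟨(p, a), ⟨hp, (h.onSide_map S a p).mp hS⟩, rfl⟩
  · rintro ⟨⟨p, a'⟩, ⟨hp, hS⟩, he⟩
    simp only [Prod.map, Prod.mk.injEq, h.bijective_side.1.eq_iff] at he
    obtain ⟨rfl, rfl⟩ := he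
    exact ⟨Finset.mem_image_of_mem g hp, (h.onSide_map S a' p).mpr hS⟩

theorem exists_onSide_map_iff (h : IsSymmetry g Φ τ) (a : SqSide) :
    (∃ q ∈ P.image g, (Φ S).OnSide (τ a) q) ↔ ∃ p ∈ P, S.OnSide a p := by
  simp only [Finset.exists_mem_image, h.onSide_map]

theorem isGenericEmpty_map (h : IsSymmetry g Φ τ) :
    IsGenericEmpty (P.image g) (Φ S) ↔ IsGenericEmpty P S := by
  simp only [IsGenericEmpty, h.contactPairs_map, Finset.forall_mem_image, h.interiorMem_map,
    Set.ncard_image_of_injective _ (h.injective_pt.prodMap h.bijective_side.1), h.r_map]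

end IsSymmetry

theorem finite_contactPairs (P : Finset (ℝ × ℝ)) (S : Square) : (contactPairs P S).Finite :=
  (P.finite_toSet.prod Set.finite_univ).subset fun _ h => ⟨h.1, trivial⟩

theorem contactPoints_eq_image (P : Finset (ℝ × ℝ)) (S : Square) :
    contactPoints P S = Prod.fst '' contactPairs P S := by
  ext p
  constructor
  · rintro ⟨hp, a, ha⟩
    exact ⟨(p, a), ⟨hp, ha⟩, rfl⟩
  · rintro ⟨⟨p, a⟩, ⟨hp, ha⟩, rfl⟩
    exact ⟨hp, a, ha⟩

theorem ncard_contactPoints_le (P : Finset (ℝ × ℝ)) (S : Square) :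
    (contactPoints P S).ncard ≤ (contactPairs P S).ncard := by
  rw [contactPoints_eq_image]
  exact Set.ncard_image_le (finite_contactPairs P S)

theorem exists_anchored_of_three_le_ncard {P : Finset (ℝ × ℝ)} {S : Square}
    (h : 3 ≤ {a : SqSide | ∃ p ∈ P, S.OnSide a p}.ncard) : ∃ z ∈ P, ∃ σ, Anchored P S z σ := by
  obtain ⟨s, hs⟩ := (Set.toFinite {a : SqSide | ∃ p ∈ P, S.OnSide a p}).exists_finset_coe
  rw [← hs, Set.ncard_coe_finset] at h
  obtain ⟨σ, hσ, h₁, h₂⟩ := SqSide.exists_cw_mem_of_three_le_card s h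
  rw [← Finset.mem_coe, hs] at hσ h₁ h₂
  obtain ⟨z, hz, hzσ⟩ := hσ
  exact ⟨z, hz, σ, hzσ, h₁, h₂⟩

section Counting

open Finset Square

variable {P : Finset (ℝ × ℝ)} {θ : ℝ} {z w : ℝ × ℝ} {F : Finset Square}

theorem card_le_three_of_corner_bottom (hw : w ∈ P)
    (hF : ∀ X ∈ F, X.θ = θ ∧ IsGenericEmpty P X ∧ X.OnSide .left z ∧ X.OnSide .bottom w ∧
      ∃ t ∈ P, X.OnSide .top t) :
    F.card ≤ 3 := by
  classical
  rcases F.eq_empty_or_nonempty with rfl | hne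
  · simp
  obtain ⟨Y, hY, hmax⟩ := F.exists_max_image (·.r) hne
  choose! t ht using fun X hX => (hF X hX).2.2.2.2
  obtain ⟨hYθ, ⟨-, hYempty, hY4⟩, hYz, hYw, -⟩ := hF Y hY
  have hsame : ∀ X ∈ F, X.θ = Y.θ := fun X hX => (hF X hX).1.trans hYθ.symm
  have hlt : ∀ X ∈ F.erase Y, X.r < Y.r := by
    intro X hX
    obtain ⟨hXY, hX⟩ := mem_erase.mp hX
    obtain ⟨-, -, hXz, hXw, -⟩ := hF X hX
    exact (hmax X hX).lt_of_ne fun hr =>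
      hXY (eq_of_r_eq_of_onSide_left_of_onSide_bottom (hsame X hX) hr hXz hYz hXw hYw)
  have hleft : ∀ X ∈ F.erase Y, Y.OnSide .left (t X) := by
    intro X hX
    obtain ⟨-, hX'⟩ := mem_erase.mp hX
    obtain ⟨-, ⟨hX0, -⟩, hXz, hXw, -⟩ := hF X hX'
    exact onSide_left_of_onSide_top (hsame X hX') hX0 (hlt X hX) hXz hYz hXw hYw
      (ht X hX').2 (hYempty _ (ht X hX').1)
  have hinj : Set.InjOn (fun X => (t X, SqSide.left)) (F.erase Y) := by
    intro X hX X' hX' he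
    obtain ⟨-, hX⟩ := mem_erase.mp hX
    obtain ⟨-, hX'⟩ := mem_erase.mp hX'
    obtain ⟨-, -, hXz, hXw, -⟩ := hF X hX
    obtain ⟨-, -, hX'z, hX'w, -⟩ := hF X' hX'
    have hθ := (hsame X hX).trans (hsame X' hX').symm
    have htt : t X = t X' := congrArg Prod.fst he
    have hXt : X.OnSide .top (t X') := htt ▸ (ht X hX).2
    exact eq_of_r_eq_of_onSide_left_of_onSide_bottom hθ
      (r_eq_of_onSide_top_of_onSide_bottom hθ hXt (ht X' hX').2 hXw hX'w) hXz hX'z hXw hX'w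
  set C := insert (t Y, SqSide.top) (insert (w, SqSide.bottom)
    ((F.erase Y).image fun X => (t X, SqSide.left)))
  have hC : (C : Set _) ⊆ contactPairs P Y := by
    intro x hx
    simp only [C, coe_insert, coe_image, Set.mem_insert_iff, Set.mem_image] at hx
    rcases hx with rfl | rfl | ⟨X, hX, rfl⟩
    exacts [ht Y hY, ⟨hw, hYw⟩, ⟨(ht X (mem_of_mem_erase hX)).1, hleft X hX⟩]
  have hcard : C.card = (F.erase Y).card + 2 := by
    rw [card_insert_of_notMem (by simp), card_insert_of_notMem (by simp),
      card_image_of_injOn hinj]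
  have := (Set.ncard_le_ncard hC (finite_contactPairs P Y)).trans hY4
  rw [Set.ncard_coe_finset, hcard, card_erase_of_mem hY] at this
  omega

theorem card_le_three_of_corner_top (hw : w ∈ P)
    (hF : ∀ X ∈ F, X.θ = θ ∧ IsGenericEmpty P X ∧ X.OnSide .left z ∧ X.OnSide .top w ∧
      ∃ b ∈ P, X.OnSide .bottom b) :
    F.card ≤ 3 := by
  classical
  have hs := isSymmetry_reflect
  rw [← F.card_image_of_injective hs.injective_sq]
  refine card_le_three_of_corner_bottom (θ := -θ) (z := reflectPt z)
    (mem_image_of_mem reflectPt hw) ?_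
  intro _ hX'
  obtain ⟨X, hX, rfl⟩ := mem_image.mp hX'
  obtain ⟨hθ, hgen, hz, hw, hb⟩ := hF X hX
  exact ⟨by simp [reflect, hθ], hs.isGenericEmpty_map.mpr hgen, (hs.onSide_map X .left z).mpr hz,
    (hs.onSide_map X .top w).mpr hw, (hs.exists_onSide_map_iff .bottom).mpr hb⟩

theorem card_le_of_anchored_left
    (hF : ∀ X ∈ F, X.θ = θ ∧ IsGenericEmpty P X ∧ Anchored P X z .left) :
    F.card ≤ 24 := by
  classical
  rcases F.eq_empty_or_nonempty with rfl | hne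
  · simp
  obtain ⟨Y, hY, hmax⟩ := F.exists_max_image (·.r) hne
  obtain ⟨hYθ, ⟨-, hYempty, hY4⟩, hYz, -⟩ := hF Y hY
  obtain ⟨Z, hZ⟩ := ((finite_contactPairs P Y).image Prod.fst).subset
    (contactPoints_eq_image P Y).le |>.exists_finset_coe
  have hZ4 : Z.card ≤ 4 := by
    rw [← Set.ncard_coe_finset, hZ]; exact (ncard_contactPoints_le P Y).trans hY4
  have hcover : F ⊆ Z.biUnion fun w =>
      F.filter (·.OnSide .bottom w) ∪ F.filter (·.OnSide .top w) := by
    intro X hX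
    obtain ⟨hXθ, -, hXa⟩ := hF X hX
    obtain ⟨w, hwP, hwY, hXw⟩ :=
      exists_pin_onBoundary (hXθ.trans hYθ.symm) (hmax X hX) hYempty hXa hYz
    have hwZ : w ∈ Z := by rw [← mem_coe, hZ]; exact ⟨hwP, hwY⟩
    exact mem_biUnion.mpr ⟨w, hwZ, by simpa [hX] using hXw⟩
  calc F.card
      ≤ ∑ w ∈ Z, (F.filter (·.OnSide .bottom w) ∪ F.filter (·.OnSide .top w)).card :=
        (Finset.card_le_card hcover).trans card_biUnion_le
    _ ≤ ∑ _w ∈ Z, (3 + 3) := by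
        refine sum_le_sum fun w hw => ?_
        have hwP : w ∈ P := by rw [← mem_coe, hZ] at hw; exact hw.1
        refine (Finset.card_union_le _ _).trans (add_le_add ?_ ?_)
        · refine card_le_three_of_corner_bottom (θ := θ) (z := z) hwP fun X hX => ?_
          obtain ⟨hX, hXw⟩ := mem_filter.mp hX
          obtain ⟨hXθ, hXg, hXz, hXt, -⟩ := hF X hX
          exact ⟨hXθ, hXg, hXz, hXw, hXt⟩
        · refine card_le_three_of_corner_top (θ := θ) (z := z) hwP fun X hX => ?_
          obtain ⟨hX, hXw⟩ := mem_filter.mp hX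
          obtain ⟨hXθ, hXg, hXz, -, hXb⟩ := hF X hX
          exact ⟨hXθ, hXg, hXz, hXw, hXb⟩
    _ ≤ 24 := by rw [sum_const, smul_eq_mul]; omega

theorem card_le_of_anchored_of_cw {σ : SqSide}
    (h : ∀ (θ : ℝ) (F : Finset Square),
      (∀ X ∈ F, X.θ = θ ∧ IsGenericEmpty P X ∧ Anchored P X z σ.cw) → F.card ≤ 24)
    (θ : ℝ) (F : Finset Square)
    (hF : ∀ X ∈ F, X.θ = θ ∧ IsGenericEmpty P X ∧ Anchored P X z σ) :
    F.card ≤ 24 := by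
  classical
  have hs := isSymmetry_turn
  rw [← F.card_image_of_injective hs.injective_sq]
  refine h (θ + π / 2) _ fun _ hX' => ?_
  obtain ⟨X, hX, rfl⟩ := mem_image.mp hX'
  obtain ⟨hθ, hgen, hz, h₁, h₂⟩ := hF X hX
  refine ⟨by simp [turn, hθ], by simpa using hs.isGenericEmpty_map.mpr hgen,
    (hs.onSide_map X σ z).mpr hz, ?_, ?_⟩
  · exact h₁.imp fun p hp => ⟨hp.1, (hs.onSide_map X _ p).mpr hp.2⟩
  · rw [← SqSide.cw_opp]
    exact h₂.imp fun p hp => ⟨hp.1, (hs.onSide_map X _ p).mpr hp.2⟩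

theorem card_le_of_anchored (σ : SqSide) (θ : ℝ) (F : Finset Square)
    (hF : ∀ X ∈ F, X.θ = θ ∧ IsGenericEmpty P X ∧ Anchored P X z σ) : F.card ≤ 24 := by
  have h_left : ∀ (θ : ℝ) (F : Finset Square),
      (∀ X ∈ F, X.θ = θ ∧ IsGenericEmpty P X ∧ Anchored P X z .left) → F.card ≤ 24 :=
    fun _ _ => card_le_of_anchored_left
  have h_bottom := card_le_of_anchored_of_cw (σ := .bottom) h_left
  have h_right := card_le_of_anchored_of_cw (σ := .right) h_bottom
  have h_top := card_le_of_anchored_of_cw (σ := .top) h_right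
  cases σ
  exacts [h_top θ F hF, h_right θ F hF, h_bottom θ F hF, h_left θ F hF]

end Counting

/-- There is a constant `c > 0` such that for every finite set
`P` of `n` points in general position and every orientation `θ`, the number of
nondegenerate empty squares in orientation `θ` with at least three pinned sides
is at most `c * n`. -/
theorem num_threePinned_squares_le_linear :
    ∃ c : ℝ, 0 < c ∧
      ∀ P : Finset (ℝ × ℝ), GenPos P →
        ∀ θ : ℝ, 0 ≤ θ → θ < Real.pi / 2 →
          ∀ T : Finset Square,
            (∀ S ∈ T, S.θ = θ ∧ 0 < S.r ∧ IsEmptySquare P S ∧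
              3 ≤ ({a : SqSide | ∃ p ∈ P, S.OnSide a p}).ncard) →
            (T.card : ℝ) ≤ c * (P.card : ℝ) := by
  classical
  refine ⟨96, by norm_num, fun P hP θ _ _ T hT => ?_⟩
  have hcover :
      T ⊆ (P ×ˢ Finset.univ).biUnion fun zσ => T.filter (Anchored P · zσ.1 zσ.2) := by
    intro S hS
    obtain ⟨z, hz, σ, hzσ⟩ := exists_anchored_of_three_le_ncard (hT S hS).2.2.2
    exact Finset.mem_biUnion.mpr ⟨(z, σ), Finset.mem_product.mpr ⟨hz, Finset.mem_univ σ⟩,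
      Finset.mem_filter.mpr ⟨hS, hzσ⟩⟩
  have hcard : T.card ≤ 96 * P.card := calc
    T.card ≤ ∑ zσ ∈ P ×ˢ Finset.univ, (T.filter (Anchored P · zσ.1 zσ.2)).card :=
      (Finset.card_le_card hcover).trans Finset.card_biUnion_le
    _ ≤ ∑ _zσ ∈ P ×ˢ (Finset.univ : Finset SqSide), 24 := by
      refine Finset.sum_le_sum fun zσ _ =>
        card_le_of_anchored (P := P) (z := zσ.1) zσ.2 θ _ fun S hS => ?_
      obtain ⟨hS, hSa⟩ := Finset.mem_filter.mp hS
      obtain ⟨hSθ, hr, hE, -⟩ := hT S hS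
      exact ⟨hSθ, ⟨hr, hE.2, hP S hE.1⟩, hSa⟩
    _ = 96 * P.card := by
      simp [Finset.card_product, show Fintype.card SqSide = 4 from rfl]; ring
  exact_mod_cast hcard
end

section
/- Let P be a finite set of points in the plane in general position, and let S be an empty square in orientation φ having a point p ∈ P at its bottom-left corner and a point q ∈ P with q ≠ p on its bottom side. Then the square S' in orientation φ whose bottom side is exactly the segment from p to q (so that p is its bottom-left corner and q is its bottom-right corner) is contained in S, is empty, and is a stapled (4,2)-square with contact type {(p, bottom), (p, left), (q, bottom), (q, right)}. -/
open Real Set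

/-!
Shrink `S` about its bottom-left corner `p` to the half-side `r' = (S.lx q + S.r) / 2`, where
`S.lx q` is the local `x`-coordinate of `q`. The shrunken square lies inside `S`, hence is empty,
and `p`, `q` are its bottom-left and bottom-right corners; `r' > 0` because `q ≠ p`. These two
corners give four contact pairs, and general position forbids any fifth one.
-/

instance inst_s13 : Fintype SqSide :=
  ⟨{SqSide.top, SqSide.right, SqSide.bottom, SqSide.left}, by intro x; cases x <;> simp⟩

namespace Square

variable {S : Square} {x : ℝ × ℝ}

theorem eq_of_lx_eq_of_ly_eq_s13 {y : ℝ × ℝ} (h1 : S.lx x = S.lx y) (h2 : S.ly x = S.ly y) :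
    x = y := by
  have hs := Real.sin_sq_add_cos_sq S.θ
  simp only [lx, ly] at h1 h2
  refine Prod.ext ?_ ?_
  · linear_combination Real.cos S.θ * h1 - Real.sin S.θ * h2 - (x.1 - y.1) * hs
  · linear_combination Real.sin S.θ * h1 + Real.cos S.θ * h2 - (x.2 - y.2) * hs

theorem onSide_bottom_and_left_of_corner (hr : 0 ≤ S.r) (hx : S.lx x = -S.r)
    (hy : S.ly x = -S.r) : S.OnSide SqSide.bottom x ∧ S.OnSide SqSide.left x := by
  have : |-S.r| ≤ S.r := by rw [abs_neg, abs_of_nonneg hr]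
  exact ⟨⟨hy, hx ▸ this⟩, ⟨hx, hy ▸ this⟩⟩

theorem onSide_bottom_and_right_of_corner (hr : 0 ≤ S.r) (hx : S.lx x = S.r)
    (hy : S.ly x = -S.r) : S.OnSide SqSide.bottom x ∧ S.OnSide SqSide.right x := by
  refine ⟨⟨hy, ?_⟩, ⟨hx, ?_⟩⟩
  · rw [hx, abs_of_nonneg hr]
  · rw [hy, abs_neg, abs_of_nonneg hr]

/-- The square of radius `r'` with the same orientation and bottom-left corner as `S`. -/
noncomputable def resizeAtBottomLeft (S : Square) (r' : ℝ) : Square where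
  center := (S.center.1 + (r' - S.r) * (Real.cos S.θ - Real.sin S.θ),
    S.center.2 + (r' - S.r) * (Real.sin S.θ + Real.cos S.θ))
  r := r'
  θ := S.θ

variable {r' : ℝ}

@[simp]
theorem r_resizeAtBottomLeft : (S.resizeAtBottomLeft r').r = r' := rfl

theorem lx_resizeAtBottomLeft : (S.resizeAtBottomLeft r').lx x = S.lx x + (S.r - r') := by
  simp only [lx, resizeAtBottomLeft]
  linear_combination (S.r - r') * Real.sin_sq_add_cos_sq S.θ

theorem ly_resizeAtBottomLeft : (S.resizeAtBottomLeft r').ly x = S.ly x + (S.r - r') := by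
  simp only [ly, resizeAtBottomLeft]
  linear_combination (S.r - r') * Real.sin_sq_add_cos_sq S.θ

theorem toSet_resizeAtBottomLeft_subset (h : r' ≤ S.r) :
    (S.resizeAtBottomLeft r').toSet ⊆ S.toSet := by
  rintro x ⟨hx, hy⟩
  rw [lx_resizeAtBottomLeft, r_resizeAtBottomLeft, abs_le] at hx
  rw [ly_resizeAtBottomLeft, r_resizeAtBottomLeft, abs_le] at hy
  exact ⟨abs_le.2 ⟨by linarith, by linarith⟩, abs_le.2 ⟨by linarith, by linarith⟩⟩

theorem InteriorMem.of_resizeAtBottomLeft (h : r' ≤ S.r)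
    (hx : (S.resizeAtBottomLeft r').InteriorMem x) : S.InteriorMem x := by
  obtain ⟨hx, hy⟩ := hx
  rw [lx_resizeAtBottomLeft, r_resizeAtBottomLeft, abs_lt] at hx
  rw [ly_resizeAtBottomLeft, r_resizeAtBottomLeft, abs_lt] at hy
  exact ⟨abs_lt.2 ⟨by linarith, by linarith⟩, abs_lt.2 ⟨by linarith, by linarith⟩⟩

end Square

section Contacts

variable {P : Finset (ℝ × ℝ)} {S : Square}

theorem IsEmptySquare.resizeAtBottomLeft {r' : ℝ} (hS : IsEmptySquare P S) (h0 : 0 ≤ r')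
    (h : r' ≤ S.r) : IsEmptySquare P (S.resizeAtBottomLeft r') :=
  ⟨⟨h0, hS.1.2⟩, fun x hx hint => hS.2 x hx (hint.of_resizeAtBottomLeft h)⟩

theorem contactPairs_finite : (contactPairs P S).Finite :=
  (P.finite_toSet.prod Set.finite_univ).subset fun _ hz => ⟨hz.1, trivial⟩

theorem contactPoints_eq_image_fst : contactPoints P S = Prod.fst '' contactPairs P S := by
  ext x
  constructor
  · rintro ⟨hx, a, ha⟩
    exact ⟨(x, a), ⟨hx, ha⟩, rfl⟩
  · rintro ⟨⟨x, a⟩, ⟨hx, ha⟩, rfl⟩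
    exact ⟨hx, a, ha⟩

theorem GenPos.contactPairs_eq {T : Set ((ℝ × ℝ) × SqSide)} (hP : GenPos P) (hS : S.Valid)
    (hT : T ⊆ contactPairs P S) (h4 : T.ncard = 4) : contactPairs P S = T :=
  (Set.eq_of_subset_of_ncard_le hT (h4 ▸ hP S hS) contactPairs_finite).symm

end Contacts

def bottomStapleContacts (p q : ℝ × ℝ) : Set ((ℝ × ℝ) × SqSide) :=
  {(p, SqSide.bottom), (p, SqSide.left), (q, SqSide.bottom), (q, SqSide.right)}

theorem ncard_bottomStapleContacts {p q : ℝ × ℝ} (hpq : p ≠ q) :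
    (bottomStapleContacts p q).ncard = 4 := by
  rw [bottomStapleContacts, Set.ncard_insert_of_notMem (by simp [hpq, Prod.ext_iff]),
    Set.ncard_insert_of_notMem (by simp [hpq, Prod.ext_iff]),
    Set.ncard_insert_of_notMem (by simp [Prod.ext_iff]), Set.ncard_singleton]

theorem image_fst_bottomStapleContacts (p q : ℝ × ℝ) :
    Prod.fst '' bottomStapleContacts p q = {p, q} := by
  simp [bottomStapleContacts, Set.image_insert_eq]

/-- If an empty square `S` has `p ∈ P` at its bottom-left corner
and `q ∈ P`, `q ≠ p`, on its bottom side, then the square `S'` in the same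
orientation whose bottom side is exactly the segment from `p` to `q` is contained
in `S`, empty, and a stapled `(4,2)`-square with contact type
`{(p, bottom), (p, left), (q, bottom), (q, right)}`. -/
theorem stapled42_from_stapled_side (P : Finset (ℝ × ℝ)) (hP : GenPos P)
    (S : Square) (hS : IsEmptySquare P S)
    (p q : ℝ × ℝ) (hp : p ∈ P) (hq : q ∈ P) (hpq : p ≠ q)
    (hpb : S.OnSide SqSide.bottom p) (hpl : S.OnSide SqSide.left p)
    (hqb : S.OnSide SqSide.bottom q) :
    ∃ S' : Square, S'.θ = S.θ ∧
      S'.OnSide SqSide.bottom p ∧ S'.OnSide SqSide.left p ∧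
      S'.OnSide SqSide.bottom q ∧ S'.OnSide SqSide.right q ∧
      S'.toSet ⊆ S.toSet ∧ IsEmptySquare P S' ∧ IsStapled P S' ∧
      Is4kSquare P 2 S' ∧
      contactPairs P S' =
        ({(p, SqSide.bottom), (p, SqSide.left), (q, SqSide.bottom), (q, SqSide.right)} :
          Set ((ℝ × ℝ) × SqSide)) := by
  have hqx : -S.r < S.lx q := lt_of_le_of_ne (abs_le.mp hqb.2).1 fun h =>
    hpq (S.eq_of_lx_eq_of_ly_eq_s13 (hpl.1.trans h) (hpb.1.trans hqb.1.symm))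
  obtain ⟨r', hr'⟩ : ∃ r', r' = (S.lx q + S.r) / 2 := ⟨_, rfl⟩
  have hr'_pos : 0 < r' := by linarith
  have hr'_le : r' ≤ S.r := by linarith [(abs_le.mp hqb.2).2]
  let S' := S.resizeAtBottomLeft r'
  obtain ⟨hpb', hpl'⟩ := S'.onSide_bottom_and_left_of_corner hr'_pos.le
    (by rw [Square.lx_resizeAtBottomLeft, Square.r_resizeAtBottomLeft, hpl.1]; ring)
    (by rw [Square.ly_resizeAtBottomLeft, Square.r_resizeAtBottomLeft, hpb.1]; ring)
  obtain ⟨hqb', hqr'⟩ := S'.onSide_bottom_and_right_of_corner hr'_pos.le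
    (by rw [Square.lx_resizeAtBottomLeft, Square.r_resizeAtBottomLeft]; linarith)
    (by rw [Square.ly_resizeAtBottomLeft, Square.r_resizeAtBottomLeft, hqb.1]; ring)
  have hempty := hS.resizeAtBottomLeft hr'_pos.le hr'_le
  have hpairs : contactPairs P S' = bottomStapleContacts p q := by
    refine hP.contactPairs_eq hempty.1 ?_ (ncard_bottomStapleContacts hpq)
    rintro _ (rfl | rfl | rfl | rfl)
    exacts [⟨hp, hpb'⟩, ⟨hp, hpl'⟩, ⟨hq, hqb'⟩, ⟨hq, hqr'⟩]
  refine ⟨S', rfl, hpb', hpl', hqb', hqr', Square.toSet_resizeAtBottomLeft_subset hr'_le, hempty,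
    ⟨SqSide.bottom, p, hp, q, hq, hpq, hpb', hqb'⟩,
    ⟨⟨hempty, hpairs ▸ ncard_bottomStapleContacts hpq⟩, ?_⟩, hpairs⟩
  rw [contactPoints_eq_image_fst, hpairs, image_fst_bottomStapleContacts, Set.ncard_pair hpq]
end

section
/- Let a, b, c, d be points in the plane ℝ² and let I ⊆ ℝ be a nonempty open interval such that for every θ ∈ I one has |⟨a − c, (−sin θ, cos θ)⟩| = |⟨b − d, (cos θ, sin θ)⟩| (that is, for every θ ∈ I the rectangle in orientation θ with a on its top side, b on its right side, c on its bottom side, and d on its left side is a square). Then ‖a − c‖ = ‖b − d‖ and the segments ac and bd are orthogonal, i.e., ⟨a − c, b − d⟩ = 0. -/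
open Real Set

/-- Dot product on `ℝ × ℝ`. -/
def dot2 (u v : ℝ × ℝ) : ℝ := u.1 * v.1 + u.2 * v.2

/-- Euclidean norm on `ℝ × ℝ`. -/
noncomputable def euclNorm (u : ℝ × ℝ) : ℝ := Real.sqrt (u.1 ^ 2 + u.2 ^ 2)

/-! Both squared sides of the hypothesis are trigonometric polynomials in `θ`, hence real
analytic, so by the identity theorem their agreement on an interval extends to all `θ`.
Writing `u = a - c` and `v = b - d`, evaluation at `θ = 0, π/2, π/4` gives
`u₂² = v₁²`, `u₁² = v₂²` and `u₁u₂ = -v₁v₂`, which force `|u| = |v|` and `⟪u, v⟫ = 0`. -/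

theorem AnalyticOnNhd.eq_of_eqOn_Ioo {E : Type*} [NormedAddCommGroup E] [NormedSpace ℝ E]
    {f g : ℝ → E} (hf : AnalyticOnNhd ℝ f univ) (hg : AnalyticOnNhd ℝ g univ) {lo hi : ℝ}
    (hlt : lo < hi) (hfg : EqOn f g (Ioo lo hi)) : f = g :=
  hf.eq_of_eventuallyEq hg <|
    Filter.eventually_of_mem (Ioo_mem_nhds (left_lt_add_div_two.2 hlt)
      (add_div_two_lt_right.2 hlt)) hfg

theorem analyticOnNhd_dot2_sq (u : ℝ × ℝ) {e₁ e₂ : ℝ → ℝ} {s : Set ℝ}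
    (h₁ : AnalyticOnNhd ℝ e₁ s) (h₂ : AnalyticOnNhd ℝ e₂ s) :
    AnalyticOnNhd ℝ (fun θ => dot2 u (e₁ θ, e₂ θ) ^ 2) s := by
  intro θ hθ
  have := h₁ θ hθ
  have := h₂ θ hθ
  simp only [dot2]
  fun_prop

theorem euclNorm_eq_and_dot2_eq_zero_of_forall_sq_eq (u v : ℝ × ℝ)
    (h : ∀ θ, dot2 u (-(sin θ), cos θ) ^ 2 = dot2 v (cos θ, sin θ) ^ 2) :
    euclNorm u = euclNorm v ∧ dot2 u v = 0 := by
  have h0 := h 0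
  have h1 := h (π / 2)
  have h2 := h (π / 4)
  simp only [dot2, sin_zero, cos_zero, sin_pi_div_two, cos_pi_div_two, sin_pi_div_four,
    cos_pi_div_four] at h0 h1 h2
  have hsqrt2 : √2 ^ 2 = 2 := sq_sqrt zero_le_two
  refine ⟨?_, ?_⟩
  · unfold euclNorm
    congr 1
    linear_combination h0 + h1
  · unfold dot2
    apply pow_eq_zero_iff two_ne_zero |>.1
    have hdiag : (u.2 - u.1) ^ 2 = (v.1 + v.2) ^ 2 := by
      linear_combination 2 * h2 + ((v.1 + v.2) ^ 2 - (u.2 - u.1) ^ 2) / 2 * hsqrt2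
    linear_combination (u.1 * u.2 - u.1 ^ 2) * h0 + (u.1 * u.2 - u.2 ^ 2) * h1 - u.1 * u.2 * hdiag

/-- If for every `θ` in a nonempty open interval the rectangle
in orientation `θ` with `a` on its top side, `b` on its right side, `c` on its
bottom side and `d` on its left side is a square (equal height and width), then
`‖a - c‖ = ‖b - d‖` and the segments `ac` and `bd` are orthogonal. -/
theorem square_on_interval_diagonals (a b c d : ℝ × ℝ) (lo hi : ℝ) (hlt : lo < hi)
    (h : ∀ θ ∈ Set.Ioo lo hi,
      |dot2 (a - c) (-(Real.sin θ), Real.cos θ)| =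
        |dot2 (b - d) (Real.cos θ, Real.sin θ)|) :
    euclNorm (a - c) = euclNorm (b - d) ∧ dot2 (a - c) (b - d) = 0 := by
  have hsq := AnalyticOnNhd.eq_of_eqOn_Ioo
    (analyticOnNhd_dot2_sq (a - c) analyticOnNhd_sin.neg analyticOnNhd_cos)
    (analyticOnNhd_dot2_sq (b - d) analyticOnNhd_cos analyticOnNhd_sin) hlt
    fun θ hθ => (sq_eq_sq_iff_abs_eq_abs _ _).2 (h θ hθ)
  exact euclNorm_eq_and_dot2_eq_zero_of_forall_sq_eq _ _ (congrFun hsq)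
end

section
/- Let P be a nonempty finite set of points in the plane in general position, and let S be a maximal empty square among P (in some orientation θ), i.e., an empty bounded nondegenerate square not properly contained in any other empty square. Then at least two of the four sides of S are pinned, i.e., S has contact pairs involving at least two distinct side labels. -/
open Real Set

private lemma shift_lx (S : Square) (dx dy r' : ℝ) (p : ℝ × ℝ) :
    (Square.mk (S.center.1 + dx * Real.cos S.θ - dy * Real.sin S.θ,
                S.center.2 + dx * Real.sin S.θ + dy * Real.cos S.θ) r' S.θ).lx p
      = S.lx p - dx := by
  simp only [Square.lx]
  linear_combination (-dx) * (Real.sin_sq_add_cos_sq S.θ)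

private lemma shift_ly (S : Square) (dx dy r' : ℝ) (p : ℝ × ℝ) :
    (Square.mk (S.center.1 + dx * Real.cos S.θ - dy * Real.sin S.θ,
                S.center.2 + dx * Real.sin S.θ + dy * Real.cos S.θ) r' S.θ).ly p
      = S.ly p - dy := by
  simp only [Square.ly]
  linear_combination (-dy) * (Real.sin_sq_add_cos_sq S.θ)

private lemma coords_lx (S : Square) (u v : ℝ) :
    S.lx (S.center.1 + u * Real.cos S.θ - v * Real.sin S.θ,
          S.center.2 + u * Real.sin S.θ + v * Real.cos S.θ) = u := by
  simp only [Square.lx]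
  linear_combination u * (Real.sin_sq_add_cos_sq S.θ)

private lemma coords_ly (S : Square) (u v : ℝ) :
    S.ly (S.center.1 + u * Real.cos S.θ - v * Real.sin S.θ,
          S.center.2 + u * Real.sin S.θ + v * Real.cos S.θ) = v := by
  simp only [Square.ly]
  linear_combination v * (Real.sin_sq_add_cos_sq S.θ)

private lemma boundary_of_mem (S : Square) (p : ℝ × ℝ) (hm : S.Mem p)
    (hni : ¬ S.InteriorMem p) : ∃ a : SqSide, S.OnSide a p := by
  obtain ⟨h1, h2⟩ := hm
  simp only [Square.InteriorMem, not_and_or, not_lt] at hni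
  rcases hni with h | h
  · have hx : |S.lx p| = S.r := le_antisymm h1 h
    rcases abs_eq (le_trans (abs_nonneg _) h1) |>.mp hx with h' | h'
    · exact ⟨SqSide.right, h', h2⟩
    · exact ⟨SqSide.left, h', h2⟩
  · have hy : |S.ly p| = S.r := le_antisymm h2 h
    rcases abs_eq (le_trans (abs_nonneg _) h2) |>.mp hy with h' | h'
    · exact ⟨SqSide.top, h', h1⟩
    · exact ⟨SqSide.bottom, h', h1⟩

private lemma grow (P : Finset (ℝ × ℝ)) (S : Square) (hr : 0 < S.r)
    (hS : IsEmptySquare P S) (dx dy δ : ℝ) (hδ : 0 < δ)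
    (hdx : |dx| ≤ δ) (hdy : |dy| ≤ δ) (hdm : δ ≤ max |dx| |dy|)
    (hpts : ∀ p ∈ P, S.r + δ ≤ |S.lx p - dx| ∨ S.r + δ ≤ |S.ly p - dy|) :
    ∃ S' : Square, IsEmptySquare P S' ∧ S.toSet ⊆ S'.toSet ∧ S.toSet ≠ S'.toSet := by
  obtain ⟨⟨hr0, hθ0, hθ1⟩, hempty⟩ := hS
  set S' : Square := Square.mk (S.center.1 + dx * Real.cos S.θ - dy * Real.sin S.θ,
      S.center.2 + dx * Real.sin S.θ + dy * Real.cos S.θ) (S.r + δ) S.θ with hS'def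
  have hlx : ∀ p, S'.lx p = S.lx p - dx := fun p => shift_lx S dx dy (S.r + δ) p
  have hly : ∀ p, S'.ly p = S.ly p - dy := fun p => shift_ly S dx dy (S.r + δ) p
  refine ⟨S', ⟨⟨by positivity, hθ0, hθ1⟩, ?_⟩, ?_, ?_⟩
  · intro p hp hint
    obtain ⟨h1, h2⟩ := hint
    rw [hlx] at h1; rw [hly] at h2
    rcases hpts p hp with h | h
    · exact absurd h1 (not_lt.mpr h)
    · exact absurd h2 (not_lt.mpr h)
  · intro p hp
    obtain ⟨h1, h2⟩ := hp
    refine ⟨?_, ?_⟩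
    · rw [hlx]
      calc |S.lx p - dx| ≤ |S.lx p| + |dx| := abs_sub _ _
        _ ≤ S.r + δ := add_le_add h1 hdx
    · rw [hly]
      calc |S.ly p - dy| ≤ |S.ly p| + |dy| := abs_sub _ _
        _ ≤ S.r + δ := add_le_add h2 hdy
  · set t : ℝ := (S.r + 2 * δ) / δ with ht
    set q : ℝ × ℝ := (S.center.1 + (t * dx) * Real.cos S.θ - (t * dy) * Real.sin S.θ,
        S.center.2 + (t * dx) * Real.sin S.θ + (t * dy) * Real.cos S.θ) with hq
    have hqx : S.lx q = t * dx := coords_lx S (t * dx) (t * dy)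
    have hqy : S.ly q = t * dy := coords_ly S (t * dx) (t * dy)
    have ht1 : (1:ℝ) ≤ t := by
      rw [ht, le_div_iff₀ hδ]; nlinarith
    have hqS' : q ∈ S'.toSet := by
      constructor
      · rw [hlx, hqx]
        have : |t * dx - dx| = (t - 1) * |dx| := by
          rw [show t * dx - dx = (t - 1) * dx by ring, abs_mul,
            abs_of_nonneg (by linarith : (0:ℝ) ≤ t - 1)]
        rw [this]
        calc (t - 1) * |dx| ≤ (t - 1) * δ := by
              apply mul_le_mul_of_nonneg_left hdx; linarith
          _ = S.r + δ := by rw [sub_mul, one_mul, ht, div_mul_cancel₀ _ hδ.ne']; ring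
      · rw [hly, hqy]
        have : |t * dy - dy| = (t - 1) * |dy| := by
          rw [show t * dy - dy = (t - 1) * dy by ring, abs_mul,
            abs_of_nonneg (by linarith : (0:ℝ) ≤ t - 1)]
        rw [this]
        calc (t - 1) * |dy| ≤ (t - 1) * δ := by
              apply mul_le_mul_of_nonneg_left hdy; linarith
          _ = S.r + δ := by rw [sub_mul, one_mul, ht, div_mul_cancel₀ _ hδ.ne']; ring
    have hqS : q ∉ S.toSet := by
      intro hmem
      obtain ⟨h1, h2⟩ := hmem
      rw [hqx] at h1; rw [hqy] at h2
      have hmax' : max |dx| |dy| = δ := le_antisymm (max_le hdx hdy) hdm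
      have htδ : t * δ = S.r + 2 * δ := by rw [ht, div_mul_cancel₀ _ hδ.ne']
      rcases max_cases |dx| |dy| with ⟨he, _⟩ | ⟨he, _⟩
      · have : |t * dx| = t * δ := by
          rw [abs_mul, abs_of_nonneg (by linarith : (0:ℝ) ≤ t), ← he, hmax']
        rw [this, htδ] at h1; linarith
      · have : |t * dy| = t * δ := by
          rw [abs_mul, abs_of_nonneg (by linarith : (0:ℝ) ≤ t)]
          rw [← he, hmax']
        rw [this, htδ] at h2; linarith
    intro heq
    exact hqS (heq ▸ hqS')

private lemma key_grow (P : Finset (ℝ × ℝ)) (S : Square) (hr : 0 < S.r)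
    (hS : IsEmptySquare P S) (a₀ : SqSide)
    (hall : ∀ p ∈ P, S.OnSide a₀ p ∨ ¬ S.Mem p) :
    ∃ S' : Square, IsEmptySquare P S' ∧ S.toSet ⊆ S'.toSet ∧ S.toSet ≠ S'.toSet := by
  classical
  obtain ⟨ε, hε, hεP⟩ : ∃ ε > 0, ∀ p ∈ P, ¬ S.Mem p → S.r + ε ≤ max |S.lx p| |S.ly p| := by
    by_cases hQ : (P.filter (fun p => ¬ S.Mem p)).Nonempty
    · obtain ⟨p₀, hp₀, hmin⟩ := Finset.exists_min_image _
        (fun p => max |S.lx p| |S.ly p|) hQ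
      have hp₀P := Finset.mem_filter.mp hp₀
      have hp₀big : S.r < max |S.lx p₀| |S.ly p₀| := by
        have := hp₀P.2
        simp only [Square.Mem, not_and_or, not_le] at this
        rcases this with h | h
        · exact lt_max_of_lt_left h
        · exact lt_max_of_lt_right h
      refine ⟨max |S.lx p₀| |S.ly p₀| - S.r, by linarith, ?_⟩
      intro p hp hm
      have : p ∈ P.filter (fun p => ¬ S.Mem p) := Finset.mem_filter.mpr ⟨hp, hm⟩
      have := hmin p this
      linarith
    · refine ⟨1, one_pos, fun p hp hm => ?_⟩
      exact absurd (Finset.mem_filter.mpr ⟨hp, hm⟩) (fun h => hQ ⟨p, h⟩)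
  set δ : ℝ := ε / 2 with hδdef
  have hδ : 0 < δ := by positivity
  have houtside : ∀ p ∈ P, ¬ S.Mem p →
      S.r + 2 * δ ≤ max |S.lx p| |S.ly p| := by
    intro p hp hm
    have := hεP p hp hm
    rw [hδdef]; linarith
  have habsδ : |δ| = δ := abs_of_pos hδ
  have habs0 : |(0:ℝ)| = 0 := abs_zero
  have habsnδ : |(-δ)| = δ := by rw [abs_neg, habsδ]
  -- helper to handle outside points
  have hout : ∀ (dx dy : ℝ), |dx| ≤ δ → |dy| ≤ δ → ∀ p ∈ P, ¬ S.Mem p →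
      S.r + δ ≤ |S.lx p - dx| ∨ S.r + δ ≤ |S.ly p - dy| := by
    intro dx dy hdx hdy p hp hm
    rcases max_cases |S.lx p| |S.ly p| with ⟨he, _⟩ | ⟨he, _⟩
    · left
      have h1 : S.r + 2 * δ ≤ |S.lx p| := he ▸ houtside p hp hm
      have := abs_sub_abs_le_abs_sub (S.lx p) dx
      linarith
    · right
      have h1 : S.r + 2 * δ ≤ |S.ly p| := he ▸ houtside p hp hm
      have := abs_sub_abs_le_abs_sub (S.ly p) dy
      linarith
  cases a₀ with
  | top =>
    refine grow P S hr hS 0 (-δ) δ hδ (by rw [habs0]; exact le_of_lt hδ) (le_of_eq habsnδ)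
      (by rw [habs0, habsnδ]; simp) ?_
    intro p hp
    rcases hall p hp with hside | hm
    · right
      obtain ⟨h1, _⟩ := hside
      rw [h1]
      rw [show S.r - -δ = S.r + δ by ring, abs_of_pos (by linarith)]
    · exact hout 0 (-δ) (by simp [le_of_lt hδ]) (le_of_eq habsnδ) p hp hm
  | bottom =>
    refine grow P S hr hS 0 δ δ hδ (by simp [le_of_lt hδ]) (le_of_eq habsδ)
      (by rw [habs0, habsδ]; simp) ?_
    intro p hp
    rcases hall p hp with hside | hm
    · right
      obtain ⟨h1, _⟩ := hside
      rw [h1]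
      rw [show -S.r - δ = -(S.r + δ) by ring, abs_neg, abs_of_pos (by linarith)]
    · exact hout 0 δ (by simp [le_of_lt hδ]) (le_of_eq habsδ) p hp hm
  | right =>
    refine grow P S hr hS (-δ) 0 δ hδ (le_of_eq habsnδ) (by simp [le_of_lt hδ])
      (by rw [habs0, habsnδ]; simp) ?_
    intro p hp
    rcases hall p hp with hside | hm
    · left
      obtain ⟨h1, _⟩ := hside
      rw [h1]
      rw [show S.r - -δ = S.r + δ by ring, abs_of_pos (by linarith)]
    · exact hout (-δ) 0 (le_of_eq habsnδ) (by simp [le_of_lt hδ]) p hp hm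
  | left =>
    refine grow P S hr hS δ 0 δ hδ (le_of_eq habsδ) (by simp [le_of_lt hδ])
      (by rw [habs0, habsδ]; simp) ?_
    intro p hp
    rcases hall p hp with hside | hm
    · left
      obtain ⟨h1, _⟩ := hside
      rw [h1]
      rw [show -S.r - δ = -(S.r + δ) by ring, abs_neg, abs_of_pos (by linarith)]
    · exact hout δ 0 (le_of_eq habsδ) (by simp [le_of_lt hδ]) p hp hm

/-- A maximal empty square among a nonempty point set in general
position has at least two pinned sides. -/
theorem maximal_empty_square_two_pinned_sides (P : Finset (ℝ × ℝ))
    (hne : P.Nonempty) (hP : GenPos P)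
    (S : Square) (hr : 0 < S.r) (hS : IsEmptySquare P S)
    (hmax : ∀ S' : Square, IsEmptySquare P S' → S.toSet ⊆ S'.toSet →
      S.toSet = S'.toSet) :
    ∃ a b : SqSide, a ≠ b ∧ (∃ p ∈ P, S.OnSide a p) ∧ (∃ p ∈ P, S.OnSide b p) := by
  by_contra h
  have huniq : ∀ a b : SqSide, (∃ p ∈ P, S.OnSide a p) → (∃ p ∈ P, S.OnSide b p) →
      a = b := by
    intro a b ha hb
    by_contra hab
    exact h ⟨a, b, hab, ha, hb⟩
  have hstep : ∃ a₀ : SqSide, ∀ p ∈ P, S.OnSide a₀ p ∨ ¬ S.Mem p := by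
    by_cases hpin : ∃ a : SqSide, ∃ p ∈ P, S.OnSide a p
    · obtain ⟨a₀, hpa⟩ := hpin
      refine ⟨a₀, fun p hp => ?_⟩
      by_cases hm : S.Mem p
      · left
        obtain ⟨a, ha⟩ := boundary_of_mem S p hm (hS.2 p hp)
        have := huniq a a₀ ⟨p, hp, ha⟩ hpa
        exact this ▸ ha
      · exact Or.inr hm
    · refine ⟨SqSide.top, fun p hp => ?_⟩
      by_cases hm : S.Mem p
      · obtain ⟨a, ha⟩ := boundary_of_mem S p hm (hS.2 p hp)
        exact absurd ⟨a, p, hp, ha⟩ hpin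
      · exact Or.inr hm
  obtain ⟨a₀, hall⟩ := hstep
  obtain ⟨S', h1, h2, h3⟩ := key_grow P S hr hS a₀ hall
  exact h3 (hmax S' h1 h2)
end
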